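/- Suppose −r ≤ r' ≤ r and r > n/2. Then ‖hf‖_{H^{r'}(ℝⁿ)} ≤ C_{r,r'} ‖h‖_{H^r(ℝⁿ)} ‖f‖_{H^{r'}(ℝⁿ)} for all h ∈ H^r, f ∈ H^{r'}. -/

import Mathlib

noncomputable section

open MeasureTheory Real ENNReal

/-- Euclidean space `ℝⁿ`. -/
abbrev En (n : ℕ) := EuclideanSpace ℝ (Fin n)

variable {n : ℕ}

/-- Fractional Laplacian `Λ^s f = 𝓕⁻¹(|ξ|^s 𝓕 f)`. -/
def fracLap (s : ℝ) (f : En n → ℂ) : En n → ℂ :=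
  FourierTransformInv.fourierInv (fun ξ => ((‖ξ‖ ^ s : ℝ) : ℂ) * FourierTransform.fourier f ξ)

/-- Inhomogeneous Sobolev norm `‖f‖_{H^s}`, defined on the Fourier side. -/
def sobNorm (s : ℝ) (f : En n → ℂ) : ℝ≥0∞ :=
  (∫⁻ ξ, ENNReal.ofReal ((1 + ‖ξ‖ ^ 2) ^ s * ‖FourierTransform.fourier f ξ‖ ^ 2)) ^ (1/2 : ℝ)

/-- Homogeneous Sobolev norm `‖f‖_{Ḣ^s}`, defined on the Fourier side. -/
def homSobNorm (s : ℝ) (f : En n → ℂ) : ℝ≥0∞ :=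
  (∫⁻ ξ, ENNReal.ofReal (‖ξ‖ ^ (2 * s) * ‖FourierTransform.fourier f ξ‖ ^ 2)) ^ (1/2 : ℝ)

lemma ofReal_norm_eq_coe_nnnorm {E : Type*} [NormedAddCommGroup E] (a : E) :
    ENNReal.ofReal ‖a‖ = ↑‖a‖₊ :=
  ENNReal.ofReal_eq_coe_nnreal _

section SPSaux

open FourierTransform RealInnerProductSpace

/-! ### Scalar kernel estimates -/

/-- triangle-type inequality for the Japanese bracket -/
lemma SPS.sqrt_one_add_sq_add (a b : ℝ) (ha : 0 ≤ a) (hb : 0 ≤ b) :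
    Real.sqrt (1 + (a + b) ^ 2) ≤ Real.sqrt (1 + a ^ 2) + Real.sqrt (1 + b ^ 2) := by
  have h1 : Real.sqrt (1 + a ^ 2) ^ 2 = 1 + a ^ 2 := Real.sq_sqrt (by positivity)
  have h2 : Real.sqrt (1 + b ^ 2) ^ 2 = 1 + b ^ 2 := Real.sq_sqrt (by positivity)
  have h1' : a ≤ Real.sqrt (1 + a ^ 2) := by
    nlinarith [Real.sqrt_nonneg (1 + a ^ 2)]
  have h2' : b ≤ Real.sqrt (1 + b ^ 2) := by
    nlinarith [Real.sqrt_nonneg (1 + b ^ 2)]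
  have key : 1 + (a + b) ^ 2 ≤ (Real.sqrt (1 + a ^ 2) + Real.sqrt (1 + b ^ 2)) ^ 2 := by
    nlinarith [Real.sqrt_nonneg (1 + a ^ 2), Real.sqrt_nonneg (1 + b ^ 2)]
  calc Real.sqrt (1 + (a + b) ^ 2)
      ≤ Real.sqrt ((Real.sqrt (1 + a ^ 2) + Real.sqrt (1 + b ^ 2)) ^ 2) := Real.sqrt_le_sqrt key
    _ = Real.sqrt (1 + a ^ 2) + Real.sqrt (1 + b ^ 2) := Real.sqrt_sq (by positivity)

/-- the scalar kernel bound -/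
lemma SPS.ker_bound {r r' A B C : ℝ} (hr : 0 ≤ r) (h1 : -r ≤ r') (h2 : r' ≤ r)
    (hA : 1 ≤ A) (hB : 1 ≤ B) (hC : 1 ≤ C) (hABC : A ≤ B + C) (hCAB : C ≤ A + B) :
    A ^ r' ≤ 2 ^ r * ((B ^ (-r) + C ^ (-r) + A ^ (-r)) * (B ^ r * C ^ r')) := by
  have hA0 : (0:ℝ) < A := by linarith
  have hB0 : (0:ℝ) < B := by linarith
  have hC0 : (0:ℝ) < C := by linarith
  have hposBC : 0 < B ^ r * C ^ r' := by positivity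
  have h2r : (0:ℝ) < 2 ^ r := by positivity
  have pA : (0:ℝ) < A ^ (-r) := Real.rpow_pos_of_pos hA0 _
  have pB : (0:ℝ) < B ^ (-r) := Real.rpow_pos_of_pos hB0 _
  have pC : (0:ℝ) < C ^ (-r) := Real.rpow_pos_of_pos hC0 _
  have hsum : B ^ (-r) ≤ B ^ (-r) + C ^ (-r) + A ^ (-r) := by linarith
  have hsumC : C ^ (-r) ≤ B ^ (-r) + C ^ (-r) + A ^ (-r) := by linarith
  have hsumA : A ^ (-r) ≤ B ^ (-r) + C ^ (-r) + A ^ (-r) := by linarith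
  rcases le_total 0 r' with hr0 | hr0
  · rcases le_total B C with hbc | hbc
    · -- B ≤ C : use A ≤ 2C, target via B^(-r) term
      have key : A ^ r' ≤ 2 ^ r * (B ^ (-r) * (B ^ r * C ^ r')) := by
        have hA2C : A ≤ 2 * C := by linarith
        have e1 : A ^ r' ≤ (2 * C) ^ r' := Real.rpow_le_rpow (by linarith) hA2C hr0
        rw [Real.mul_rpow (by norm_num) hC0.le] at e1
        have e3 : B ^ (-r) * (B ^ r * C ^ r') = C ^ r' := by
          rw [← mul_assoc, ← Real.rpow_add hB0]
          simp
        rw [e3]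
        calc A ^ r' ≤ 2 ^ r' * C ^ r' := e1
          _ ≤ 2 ^ r * C ^ r' := by gcongr <;> norm_num
      refine key.trans ?_
      gcongr
    · -- C ≤ B : use A ≤ 2B, C^(-r) term
      have key : A ^ r' ≤ 2 ^ r * (C ^ (-r) * (B ^ r * C ^ r')) := by
        have hA2B : A ≤ 2 * B := by linarith
        have e1 : A ^ r' ≤ (2 * B) ^ r' := Real.rpow_le_rpow (by linarith) hA2B hr0
        rw [Real.mul_rpow (by norm_num) hB0.le] at e1
        have e4 : B ^ (r' - r) ≤ C ^ (r' - r) :=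
          Real.rpow_le_rpow_of_nonpos hC0 hbc (by linarith)
        have e5 : B ^ r' = B ^ (r' - r) * B ^ r := by
          rw [← Real.rpow_add hB0]; ring_nf
        have e6 : C ^ (r' - r) = C ^ (-r) * C ^ r' := by
          rw [← Real.rpow_add hC0]; ring_nf
        calc A ^ r' ≤ 2 ^ r' * B ^ r' := e1
          _ ≤ 2 ^ r * B ^ r' := by gcongr <;> norm_num
          _ = 2 ^ r * (B ^ (r' - r) * B ^ r) := by rw [← e5]
          _ ≤ 2 ^ r * (C ^ (r' - r) * B ^ r) := by gcongr
          _ = 2 ^ r * (C ^ (-r) * (B ^ r * C ^ r')) := by rw [e6]; ring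
      refine key.trans ?_
      gcongr
  · rcases le_total B A with hba | hba
    · -- B ≤ A, so C ≤ 2A : A^r' ≤ 2^(-r') C^r'
      have key : A ^ r' ≤ 2 ^ r * (B ^ (-r) * (B ^ r * C ^ r')) := by
        have e3 : B ^ (-r) * (B ^ r * C ^ r') = C ^ r' := by
          rw [← mul_assoc, ← Real.rpow_add hB0]; simp
        rw [e3]
        have hC2A : C / 2 ≤ A := by linarith
        have e1 : A ^ r' ≤ (C / 2) ^ r' :=
          Real.rpow_le_rpow_of_nonpos (by linarith) hC2A hr0
        have e2 : (C / 2) ^ r' = C ^ r' / 2 ^ r' :=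
          Real.div_rpow hC0.le (by norm_num : (0:ℝ) ≤ 2) r'
        have e4 : (1:ℝ) ≤ 2 ^ r * 2 ^ r' := by
          rw [← Real.rpow_add (by norm_num)]
          have : (0:ℝ) ≤ r + r' := by linarith
          calc (1:ℝ) = 2 ^ (0:ℝ) := by simp
            _ ≤ 2 ^ (r + r') := Real.rpow_le_rpow_of_exponent_le one_le_two this
        have h2r' : (0:ℝ) < 2 ^ r' := by positivity
        have hCr' : (0:ℝ) < C ^ r' := by positivity
        calc A ^ r' ≤ C ^ r' / 2 ^ r' := by rw [← e2]; exact e1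
          _ ≤ (2 ^ r * 2 ^ r') * (C ^ r' / 2 ^ r') := by
              nlinarith [div_pos hCr' h2r']
          _ = 2 ^ r * C ^ r' := by field_simp
      refine key.trans ?_
      gcongr
    · -- A ≤ B : use A^(-r) term
      have key : A ^ r' ≤ 2 ^ r * (A ^ (-r) * (B ^ r * C ^ r')) := by
        have hC2B : C ≤ 2 * B := by linarith
        have e1 : (2 * B) ^ r' ≤ C ^ r' :=
          Real.rpow_le_rpow_of_nonpos hC0 hC2B hr0
        have e2 : (2 * B) ^ r' = 2 ^ r' * B ^ r' := Real.mul_rpow (by norm_num) hB0.le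
        have e3 : A ^ (r + r') ≤ B ^ (r + r') := Real.rpow_le_rpow hA0.le hba (by linarith)
        have e4 : (1:ℝ) ≤ 2 ^ (r + r') := by
          calc (1:ℝ) = 2 ^ (0:ℝ) := by simp
            _ ≤ 2 ^ (r + r') := Real.rpow_le_rpow_of_exponent_le one_le_two (by linarith)
        calc A ^ r'
            = A ^ (-r) * A ^ (r + r') := by rw [← Real.rpow_add hA0]; ring_nf
          _ ≤ 2 ^ (r + r') * (A ^ (-r) * A ^ (r + r')) := by
              nlinarith [Real.rpow_pos_of_pos hA0 (-r), Real.rpow_pos_of_pos hA0 (r + r'),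
                mul_pos (Real.rpow_pos_of_pos hA0 (-r)) (Real.rpow_pos_of_pos hA0 (r + r'))]
          _ ≤ 2 ^ (r + r') * (A ^ (-r) * B ^ (r + r')) := by gcongr
          _ = 2 ^ r * (A ^ (-r) * (B ^ r * (2 ^ r' * B ^ r'))) := by
              rw [Real.rpow_add (show (0:ℝ) < 2 by norm_num), Real.rpow_add hB0]; ring
          _ ≤ 2 ^ r * (A ^ (-r) * (B ^ r * C ^ r')) := by
              rw [← e2]
              gcongr
      refine key.trans ?_
      gcongr

/-- kernel bound, multiplied through by two nonnegative amplitudes -/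
lemma SPS.ker_bound_mul {r r' A B C : ℝ} (hr : 0 ≤ r) (h1 : -r ≤ r') (h2 : r' ≤ r)
    (hA : 1 ≤ A) (hB : 1 ≤ B) (hC : 1 ≤ C) (hABC : A ≤ B + C) (hCAB : C ≤ A + B)
    {p q : ℝ} (hp : 0 ≤ p) (hq : 0 ≤ q) :
    A ^ r' * (p * q) ≤
      2 ^ r * ((B ^ (-r) + C ^ (-r) + A ^ (-r)) * ((B ^ r * p) * (C ^ r' * q))) := by
  have hk := SPS.ker_bound hr h1 h2 hA hB hC hABC hCAB
  calc A ^ r' * (p * q)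
      ≤ (2 ^ r * ((B ^ (-r) + C ^ (-r) + A ^ (-r)) * (B ^ r * C ^ r'))) * (p * q) := by
        apply mul_le_mul_of_nonneg_right hk (by positivity)
    _ = 2 ^ r * ((B ^ (-r) + C ^ (-r) + A ^ (-r)) * ((B ^ r * p) * (C ^ r' * q))) := by ring

/-! ### Japanese bracket -/

/-- the Japanese bracket -/
def SPS.jb (ξ : En n) : ℝ := Real.sqrt (1 + ‖ξ‖ ^ 2)

lemma SPS.jb_one_le (ξ : En n) : 1 ≤ SPS.jb ξ := by
  rw [show (1:ℝ) = Real.sqrt 1 by simp [Real.sqrt_one]]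
  exact Real.sqrt_le_sqrt (by nlinarith [sq_nonneg ‖ξ‖])

lemma SPS.jb_pos (ξ : En n) : 0 < SPS.jb ξ := lt_of_lt_of_le one_pos (SPS.jb_one_le ξ)

lemma SPS.jb_triangle (x y : En n) : SPS.jb (x + y) ≤ SPS.jb x + SPS.jb y := by
  have h1 : SPS.jb (x + y) ≤ Real.sqrt (1 + (‖x‖ + ‖y‖) ^ 2) := by
    apply Real.sqrt_le_sqrt
    nlinarith [norm_add_le x y, norm_nonneg (x + y), norm_nonneg x, norm_nonneg y]
  exact h1.trans (SPS.sqrt_one_add_sq_add ‖x‖ ‖y‖ (norm_nonneg x) (norm_nonneg y))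

lemma SPS.jb_neg (ξ : En n) : SPS.jb (-ξ) = SPS.jb ξ := by
  unfold SPS.jb; rw [norm_neg]

lemma SPS.jb_rpow_sq (s : ℝ) (ξ : En n) :
    SPS.jb ξ ^ s * SPS.jb ξ ^ s = (1 + ‖ξ‖ ^ 2) ^ s := by
  have h0 : (0:ℝ) ≤ 1 + ‖ξ‖ ^ 2 := by positivity
  rw [← Real.rpow_add (SPS.jb_pos ξ)]
  unfold SPS.jb
  rw [Real.sqrt_eq_rpow, ← Real.rpow_mul h0]
  norm_num
  rw [show (1/2 : ℝ) * (s + s) = s by ring]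

lemma SPS.jb_continuous : Continuous (SPS.jb : En n → ℝ) := by
  apply Real.continuous_sqrt.comp
  exact continuous_const.add ((continuous_norm).pow 2)

/-- the ENNReal-valued weight -/
def SPS.wgt (s : ℝ) (ξ : En n) : ℝ≥0∞ := ENNReal.ofReal (SPS.jb ξ ^ s)

lemma SPS.wgt_meas (s : ℝ) : Measurable (SPS.wgt s : En n → ℝ≥0∞) :=
  ENNReal.measurable_ofReal.comp
    (SPS.jb_continuous.rpow_const fun ξ => Or.inl (SPS.jb_pos ξ).ne').measurable

/-! ### basic ℝ≥0∞ facts -/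

lemma SPS.rpow_half_sq (x : ℝ≥0∞) : x ^ (2⁻¹:ℝ) * x ^ (2⁻¹:ℝ) = x := by
  rw [← ENNReal.rpow_add_of_nonneg _ _ (by norm_num) (by norm_num)]
  norm_num

lemma SPS.sq_rpow_half (x : ℝ≥0∞) : (x ^ (2:ℝ)) ^ (2⁻¹:ℝ) = x := by
  rw [← ENNReal.rpow_mul]; norm_num

lemma SPS.rpow_two' (x : ℝ≥0∞) : x ^ (2:ℝ) = x * x := by
  rw [show (2:ℝ) = ((2:ℕ):ℝ) by norm_num, ENNReal.rpow_natCast]; ring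

/-- the L² (lower-integral) norm -/
def SPS.N2 (F : En n → ℝ≥0∞) : ℝ≥0∞ := (∫⁻ ξ, F ξ ^ (2:ℝ)) ^ (2⁻¹:ℝ)

lemma SPS.N2_mono {F G : En n → ℝ≥0∞} (h : ∀ ξ, F ξ ≤ G ξ) : SPS.N2 F ≤ SPS.N2 G := by
  unfold SPS.N2
  refine ENNReal.rpow_le_rpow (lintegral_mono fun ξ => ?_) (by norm_num)
  exact ENNReal.rpow_le_rpow (h ξ) (by norm_num)

lemma SPS.N2_const_mul (c : ℝ≥0∞) (F : En n → ℝ≥0∞) (hF : Measurable F) :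
    SPS.N2 (fun ξ => c * F ξ) = c * SPS.N2 F := by
  unfold SPS.N2
  have : ∀ ξ, (c * F ξ) ^ (2:ℝ) = c ^ (2:ℝ) * F ξ ^ (2:ℝ) := fun ξ =>
    ENNReal.mul_rpow_of_nonneg _ _ (by norm_num)
  simp_rw [this]
  rw [lintegral_const_mul _ (hF.pow_const _),
    ENNReal.mul_rpow_of_nonneg _ _ (by norm_num : (0:ℝ) ≤ 2⁻¹), ← ENNReal.rpow_mul]
  norm_num

lemma SPS.N2_mul_const (c : ℝ≥0∞) (F : En n → ℝ≥0∞) (hF : Measurable F) :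
    SPS.N2 (fun ξ => F ξ * c) = SPS.N2 F * c := by
  simp_rw [mul_comm _ c]
  exact SPS.N2_const_mul c F hF

lemma SPS.N2_add_le {F G : En n → ℝ≥0∞} (hF : Measurable F) (hG : Measurable G) :
    SPS.N2 (fun ξ => F ξ + G ξ) ≤ SPS.N2 F + SPS.N2 G := by
  unfold SPS.N2
  have h := ENNReal.lintegral_Lp_add_le (μ := (volume : Measure (En n)))
    hF.aemeasurable hG.aemeasurable (by norm_num : (1:ℝ) ≤ 2)
  simpa [one_div] using h

/-- Cauchy-Schwarz for lintegral over En n -/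
lemma SPS.cs_lintegral {F G : En n → ℝ≥0∞} (hF : AEMeasurable F) (hG : AEMeasurable G) :
    ∫⁻ x, F x * G x ≤ SPS.N2 F * SPS.N2 G := by
  have h := ENNReal.lintegral_mul_norm_pow_le (μ := (volume : Measure (En n)))
    (hF.pow_const (2:ℝ)) (hG.pow_const (2:ℝ)) (by norm_num) (by norm_num)
    (by norm_num : (2⁻¹:ℝ) + 2⁻¹ = 1)
  calc ∫⁻ x, F x * G x = ∫⁻ x, (F x ^ (2:ℝ)) ^ (2⁻¹:ℝ) * (G x ^ (2:ℝ)) ^ (2⁻¹:ℝ) := by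
        simp_rw [SPS.sq_rpow_half]
    _ ≤ _ := h

/-- substitution η ↦ ξ - η -/
lemma SPS.lintegral_reflect (F : En n → ℝ≥0∞) (hF : Measurable F) (ξ : En n) :
    ∫⁻ η, F (ξ - η) = ∫⁻ η, F η :=
  (Measure.measurePreserving_sub_left volume ξ).lintegral_comp hF

lemma SPS.swap_var (F G : En n → ℝ≥0∞) (hF : Measurable F) (hG : Measurable G) (ξ : En n) :
    ∫⁻ ζ, F ζ * G (ξ - ζ) = ∫⁻ η, F (ξ - η) * G η := by
  have h := SPS.lintegral_reflect (fun ζ => F ζ * G (ξ - ζ))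
    (hF.mul (hG.comp (measurable_const.sub measurable_id))) ξ
  simpa [sub_sub_cancel] using h.symm

set_option linter.unusedVariables false in
lemma SPS.swap_var_placeholder : True := trivial

/-- Young : L¹ ⋆ L² → L², in ℝ≥0∞ form -/
lemma SPS.conv_L1_L2 {u W : En n → ℝ≥0∞} (hu : Measurable u) (hW : Measurable W) :
    SPS.N2 (fun ξ => ∫⁻ η, u (ξ - η) * W η) ≤ (∫⁻ x, u x) * SPS.N2 W := by
  have step1 : ∀ ξ, (∫⁻ η, u (ξ - η) * W η) ^ (2:ℝ) ≤
      (∫⁻ x, u x) * ∫⁻ η, u (ξ - η) * W η ^ (2:ℝ) := by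
    intro ξ
    have hcs : ∫⁻ η, u (ξ - η) * W η ≤
        (∫⁻ η, u (ξ - η)) ^ (2⁻¹:ℝ) * (∫⁻ η, u (ξ - η) * W η ^ (2:ℝ)) ^ (2⁻¹:ℝ) := by
      have h := ENNReal.lintegral_mul_norm_pow_le (μ := (volume : Measure (En n)))
        (f := fun η => u (ξ - η)) (g := fun η => u (ξ - η) * W η ^ (2:ℝ))
        ((hu.comp (measurable_const.sub measurable_id)).aemeasurable)
        (((hu.comp (measurable_const.sub measurable_id)).mul (hW.pow_const _)).aemeasurable)
        (by norm_num : (0:ℝ) ≤ 2⁻¹) (by norm_num : (0:ℝ) ≤ 2⁻¹)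
        (by norm_num : (2⁻¹:ℝ) + 2⁻¹ = 1)
      refine le_trans (le_of_eq ?_) h
      congr 1; ext η
      rw [ENNReal.mul_rpow_of_nonneg _ _ (by norm_num : (0:ℝ) ≤ 2⁻¹)]
      calc u (ξ - η) * W η
          = (u (ξ - η) ^ (2⁻¹:ℝ) * u (ξ - η) ^ (2⁻¹:ℝ)) * ((W η ^ (2:ℝ)) ^ (2⁻¹:ℝ)) := by
            rw [SPS.rpow_half_sq, SPS.sq_rpow_half]
        _ = u (ξ - η) ^ (2⁻¹:ℝ) * (u (ξ - η) ^ (2⁻¹:ℝ) * (W η ^ (2:ℝ)) ^ (2⁻¹:ℝ)) := by ring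
    calc (∫⁻ η, u (ξ - η) * W η) ^ (2:ℝ)
        ≤ ((∫⁻ η, u (ξ - η)) ^ (2⁻¹:ℝ) * (∫⁻ η, u (ξ - η) * W η ^ (2:ℝ)) ^ (2⁻¹:ℝ)) ^ (2:ℝ) := by
          gcongr
      _ = (∫⁻ η, u (ξ - η)) * ∫⁻ η, u (ξ - η) * W η ^ (2:ℝ) := by
          rw [ENNReal.mul_rpow_of_nonneg _ _ (by norm_num : (0:ℝ) ≤ 2)]
          rw [← ENNReal.rpow_mul, ← ENNReal.rpow_mul]
          norm_num
      _ = (∫⁻ x, u x) * ∫⁻ η, u (ξ - η) * W η ^ (2:ℝ) := by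
          rw [SPS.lintegral_reflect u hu ξ]
  have step2 : ∫⁻ ξ, (∫⁻ η, u (ξ - η) * W η) ^ (2:ℝ) ≤
      (∫⁻ x, u x) * ((∫⁻ x, u x) * ∫⁻ η, W η ^ (2:ℝ)) := by
    calc ∫⁻ ξ, (∫⁻ η, u (ξ - η) * W η) ^ (2:ℝ)
        ≤ ∫⁻ ξ, (∫⁻ x, u x) * ∫⁻ η, u (ξ - η) * W η ^ (2:ℝ) := lintegral_mono step1
      _ = (∫⁻ x, u x) * ∫⁻ ξ, ∫⁻ η, u (ξ - η) * W η ^ (2:ℝ) := lintegral_const_mul _ <| by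
          apply Measurable.lintegral_prod_right
          exact (hu.comp (measurable_fst.sub measurable_snd)).mul
            ((hW.comp measurable_snd).pow_const _)
      _ = (∫⁻ x, u x) * ∫⁻ η, ∫⁻ ξ, u (ξ - η) * W η ^ (2:ℝ) := by
          congr 1
          exact lintegral_lintegral_swap
            (((hu.comp (measurable_fst.sub measurable_snd)).mul
              ((hW.comp measurable_snd).pow_const _)).aemeasurable)
      _ = (∫⁻ x, u x) * ((∫⁻ x, u x) * ∫⁻ η, W η ^ (2:ℝ)) := by
          congr 1
          calc ∫⁻ η, ∫⁻ ξ, u (ξ - η) * W η ^ (2:ℝ)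
              = ∫⁻ η, (∫⁻ ξ, u (ξ - η)) * W η ^ (2:ℝ) := by
                congr 1; ext η; exact lintegral_mul_const _ (hu.comp (measurable_sub_const η))
            _ = ∫⁻ η, (∫⁻ x, u x) * W η ^ (2:ℝ) := by
                congr 1; ext η
                congr 1
                exact (measurePreserving_sub_right volume η).lintegral_comp hu
            _ = (∫⁻ x, u x) * ∫⁻ η, W η ^ (2:ℝ) :=
                lintegral_const_mul _ (hW.pow_const _)
  calc SPS.N2 (fun ξ => ∫⁻ η, u (ξ - η) * W η)
      ≤ ((∫⁻ x, u x) * ((∫⁻ x, u x) * ∫⁻ η, W η ^ (2:ℝ))) ^ (2⁻¹:ℝ) := by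
        unfold SPS.N2; gcongr
    _ = (∫⁻ x, u x) * SPS.N2 W := by
        unfold SPS.N2
        rw [← mul_assoc, ← SPS.rpow_two' (∫⁻ x, u x),
          ENNReal.mul_rpow_of_nonneg _ _ (by norm_num : (0:ℝ) ≤ 2⁻¹), ← ENNReal.rpow_mul]
        norm_num

/-- pointwise bound of a convolution of two L² functions -/
lemma SPS.conv_sup {G W : En n → ℝ≥0∞} (hG : Measurable G) (hW : Measurable W) (ξ : En n) :
    ∫⁻ ζ, G ζ * W (ξ - ζ) ≤ SPS.N2 G * SPS.N2 W := by
  have hWr : Measurable (fun ζ : En n => W (ξ - ζ)) :=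
    hW.comp (measurable_const.sub measurable_id)
  calc ∫⁻ ζ, G ζ * W (ξ - ζ) ≤ SPS.N2 G * SPS.N2 (fun ζ => W (ξ - ζ)) :=
        SPS.cs_lintegral hG.aemeasurable hWr.aemeasurable
    _ = SPS.N2 G * SPS.N2 W := by
        unfold SPS.N2
        congr 2
        exact SPS.lintegral_reflect (fun x => W x ^ (2:ℝ)) (hW.pow_const _) ξ

/-! ### Fourier facts for Schwartz functions -/

lemma SPS.fourier_coe (h : SchwartzMap (En n) ℂ) :
    𝓕 (⇑h) = ⇑(SchwartzMap.fourierTransformCLM ℂ h) := by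
  ext ξ; rw [SchwartzMap.fourierTransformCLM_apply]; rfl

lemma SPS.fourier_cont (h : SchwartzMap (En n) ℂ) : Continuous (𝓕 (⇑h)) := by
  rw [SPS.fourier_coe]; exact (SchwartzMap.fourierTransformCLM ℂ h).continuous

lemma SPS.fourier_int (h : SchwartzMap (En n) ℂ) : Integrable (𝓕 (⇑h)) := by
  rw [SPS.fourier_coe]; exact (SchwartzMap.fourierTransformCLM ℂ h).integrable

/-- convolution theorem -/
lemma SPS.fourier_mul (h f : SchwartzMap (En n) ℂ) (ξ : En n) :
    𝓕 (fun x => h x * f x) ξ = ∫ ζ, 𝓕 (⇑h) ζ * 𝓕 (⇑f) (ξ - ζ) := by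
  have hinv : ∀ x : En n,
      (∫ ζ, Complex.exp ((2 * π * ⟪ζ, x⟫ : ℝ) * Complex.I) * (𝓕 (⇑h)) ζ) = h x := by
    intro x
    have h1 : 𝓕⁻ (𝓕 (⇑h)) x = h x := by
      rw [Continuous.fourierInv_fourier_eq h.continuous h.integrable (SPS.fourier_int h)]
    rw [Real.fourierInv_eq'] at h1
    simpa [smul_eq_mul] using h1
  have hswap :
      (∫ x, ∫ ζ, Complex.exp ((-2 * π * ⟪x, ξ⟫ : ℝ) * Complex.I) *
          ((Complex.exp ((2 * π * ⟪ζ, x⟫ : ℝ) * Complex.I) * 𝓕 (⇑h) ζ) * f x))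
        = ∫ ζ, ∫ x, Complex.exp ((-2 * π * ⟪x, ξ⟫ : ℝ) * Complex.I) *
          ((Complex.exp ((2 * π * ⟪ζ, x⟫ : ℝ) * Complex.I) * 𝓕 (⇑h) ζ) * f x) := by
    apply integral_integral_swap
    have hcont : Continuous (Function.uncurry fun (x ζ : En n) =>
        Complex.exp ((-2 * π * ⟪x, ξ⟫ : ℝ) * Complex.I) *
          ((Complex.exp ((2 * π * ⟪ζ, x⟫ : ℝ) * Complex.I) * 𝓕 (⇑h) ζ) * f x)) := by
      apply Continuous.mul
      · apply Complex.continuous_exp.comp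
        apply Continuous.mul _ continuous_const
        apply Complex.continuous_ofReal.comp
        exact (continuous_const.mul ((continuous_fst.inner continuous_const)))
      · apply Continuous.mul
        · apply Continuous.mul
          · apply Complex.continuous_exp.comp
            apply Continuous.mul _ continuous_const
            apply Complex.continuous_ofReal.comp
            exact (continuous_const.mul ((continuous_snd.inner continuous_fst)))
          · exact (SPS.fourier_cont h).comp continuous_snd
        · exact f.continuous.comp continuous_fst
    apply Integrable.mono' ((f.integrable.norm).mul_prod ((SPS.fourier_int h).norm))
      hcont.aestronglyMeasurable
    refine Filter.Eventually.of_forall fun p => ?_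
    simp only [Function.uncurry]
    rw [norm_mul, norm_mul, norm_mul, Complex.norm_exp_ofReal_mul_I,
      Complex.norm_exp_ofReal_mul_I]
    simp [mul_comm]
  calc 𝓕 (fun x => h x * f x) ξ
      = ∫ x, Complex.exp ((-2 * π * ⟪x, ξ⟫ : ℝ) * Complex.I) * (h x * f x) := by
        rw [Real.fourier_eq']
        simp_rw [smul_eq_mul]
    _ = ∫ x, ∫ ζ, Complex.exp ((-2 * π * ⟪x, ξ⟫ : ℝ) * Complex.I) *
          ((Complex.exp ((2 * π * ⟪ζ, x⟫ : ℝ) * Complex.I) * 𝓕 (⇑h) ζ) * f x) := by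
        congr 1; ext x
        rw [MeasureTheory.integral_const_mul, MeasureTheory.integral_mul_const, hinv x]
    _ = ∫ ζ, ∫ x, Complex.exp ((-2 * π * ⟪x, ξ⟫ : ℝ) * Complex.I) *
          ((Complex.exp ((2 * π * ⟪ζ, x⟫ : ℝ) * Complex.I) * 𝓕 (⇑h) ζ) * f x) := hswap
    _ = ∫ ζ, 𝓕 (⇑h) ζ * ∫ x, Complex.exp ((-2 * π * ⟪x, ξ - ζ⟫ : ℝ) * Complex.I) * f x := by
        congr 1; ext ζ
        rw [← MeasureTheory.integral_const_mul]
        congr 1; ext x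
        have harg : ((-2 * π * ⟪x, ξ⟫ : ℝ) * Complex.I) + ((2 * π * ⟪ζ, x⟫ : ℝ) * Complex.I)
            = ((-2 * π * ⟪x, ξ - ζ⟫ : ℝ) * Complex.I) := by
          rw [inner_sub_right, real_inner_comm ζ x]
          push_cast
          ring
        rw [← harg, Complex.exp_add]
        ring
    _ = ∫ ζ, 𝓕 (⇑h) ζ * 𝓕 (⇑f) (ξ - ζ) := by
        congr 1; ext ζ
        congr 1
        rw [Real.fourier_eq']
        simp_rw [smul_eq_mul]


/-! ### bridges between `sobNorm` and `N2` -/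

lemma SPS.wgt_sq_bridge (s : ℝ) (g : En n → ℂ) (ξ : En n) :
    ENNReal.ofReal ((1 + ‖ξ‖ ^ 2) ^ s * ‖FourierTransform.fourier g ξ‖ ^ 2)
      = (SPS.wgt s ξ * ↑‖FourierTransform.fourier g ξ‖₊) ^ (2:ℝ) := by
  rw [SPS.rpow_two', ← ofReal_norm_eq_coe_nnnorm]
  unfold SPS.wgt
  rw [← ENNReal.ofReal_mul (Real.rpow_nonneg (SPS.jb_pos ξ).le _),
    ← ENNReal.ofReal_mul (mul_nonneg (Real.rpow_nonneg (SPS.jb_pos ξ).le _) (norm_nonneg _))]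
  congr 1
  rw [← SPS.jb_rpow_sq s ξ, pow_two]
  ring

lemma SPS.sobNorm_eq (s : ℝ) (g : En n → ℂ) :
    sobNorm s g = SPS.N2 (fun ξ => SPS.wgt s ξ * ↑‖FourierTransform.fourier g ξ‖₊) := by
  unfold sobNorm SPS.N2
  rw [show (1/2:ℝ) = 2⁻¹ by norm_num]
  congr 1
  exact lintegral_congr fun ξ => SPS.wgt_sq_bridge s g ξ

lemma SPS.M_lintegral_ne_top {r : ℝ} (hnr : (n:ℝ) < 2 * r) :
    (∫⁻ ξ : En n, (SPS.wgt (-r) ξ) ^ (2:ℝ)) ≠ ⊤ := by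
  have hfr : ((Module.finrank ℝ (En n) : ℝ)) < 2 * r := by
    rw [finrank_euclideanSpace_fin]; exact hnr
  have hint : Integrable (fun ξ : En n => ((1:ℝ) + ‖ξ‖ ^ 2) ^ (-(2*r) / 2)) :=
    integrable_rpow_neg_one_add_norm_sq hfr
  have heq : ∀ ξ : En n,
      (SPS.wgt (-r) ξ) ^ (2:ℝ) = ENNReal.ofReal ((1 + ‖ξ‖ ^ 2) ^ (-(2*r) / 2)) := by
    intro ξ
    rw [SPS.rpow_two']
    unfold SPS.wgt
    rw [← ENNReal.ofReal_mul (Real.rpow_nonneg (SPS.jb_pos ξ).le _), SPS.jb_rpow_sq,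
      show (-(2*r)/2 : ℝ) = -r by ring]
  rw [lintegral_congr heq]
  refine ne_of_lt (lt_of_le_of_lt ?_ hint.hasFiniteIntegral)
  refine lintegral_mono fun ξ => ?_
  rw [← ofReal_norm]
  exact ENNReal.ofReal_le_ofReal (le_abs_self _)

end SPSaux

/-- if `−r ≤ r' ≤ r` and `r > n/2`, then
`‖hf‖_{H^{r'}} ≤ C_{r,r'} ‖h‖_{H^r} ‖f‖_{H^{r'}}` on `ℝⁿ`. -/
theorem sobolev_product_supercritical (n : ℕ) (r r' : ℝ)
    (hlow : -r ≤ r') (hhigh : r' ≤ r) (hr : n / 2 < r) :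
    ∃ C : ℝ, 0 < C ∧ ∀ h f : SchwartzMap (En n) ℂ,
      sobNorm r' (fun x => h x * f x) ≤
        ENNReal.ofReal C * (sobNorm r h * sobNorm r' f) := by
  have hr0 : 0 ≤ r := le_trans (by positivity) hr.le
  have hn2r : (n:ℝ) < 2 * r := by
    have h' : (n:ℝ) / 2 < r := hr
    linarith
  set κ : ℝ≥0∞ := SPS.N2 (SPS.wgt (-r) : En n → ℝ≥0∞) with hκdef
  have hκne : κ ≠ ⊤ := by
    rw [hκdef]
    unfold SPS.N2
    exact ENNReal.rpow_ne_top_of_nonneg (by norm_num) (SPS.M_lintegral_ne_top hn2r)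
  refine ⟨2 ^ r * 3 * (κ.toReal + 1), by positivity, fun h f => ?_⟩
  set FH := FourierTransform.fourier (⇑h) with hFHdef
  set FF := FourierTransform.fourier (⇑f) with hFFdef
  set M : En n → ℝ≥0∞ := fun ξ => SPS.wgt (-r) ξ with hMdef
  set G : En n → ℝ≥0∞ := fun ζ => SPS.wgt r ζ * ↑‖FH ζ‖₊ with hGdef
  set W : En n → ℝ≥0∞ := fun η => SPS.wgt r' η * ↑‖FF η‖₊ with hWdef
  have hMm : Measurable M := SPS.wgt_meas (-r)
  have hFHm : Measurable FH := (SPS.fourier_cont h).measurable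
  have hFFm : Measurable FF := (SPS.fourier_cont f).measurable
  have hGm : Measurable G := (SPS.wgt_meas r).mul (hFHm.nnnorm.coe_nnreal_ennreal)
  have hWm : Measurable W := (SPS.wgt_meas r').mul (hFFm.nnnorm.coe_nnreal_ennreal)
  have henorm : ∀ ξ, (↑‖FourierTransform.fourier (fun x => h x * f x) ξ‖₊ : ℝ≥0∞)
      ≤ ∫⁻ ζ, ↑‖FH ζ‖₊ * ↑‖FF (ξ - ζ)‖₊ := by
    intro ξ
    rw [hFHdef, hFFdef, SPS.fourier_mul h f ξ]
    refine le_trans (enorm_integral_le_lintegral_enorm _) ?_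
    simp_rw [enorm_mul]
    exact le_rfl
  have hker : ∀ ξ ζ : En n, SPS.wgt r' ξ * (↑‖FH ζ‖₊ * ↑‖FF (ξ - ζ)‖₊)
      ≤ ENNReal.ofReal (2 ^ r) * ((M ζ + M (ξ - ζ) + M ξ) * (G ζ * W (ξ - ζ))) := by
    intro ξ ζ
    have hABC : SPS.jb ξ ≤ SPS.jb ζ + SPS.jb (ξ - ζ) := by
      have h' := SPS.jb_triangle ζ (ξ - ζ)
      rwa [add_sub_cancel] at h'
    have hCAB : SPS.jb (ξ - ζ) ≤ SPS.jb ξ + SPS.jb ζ := by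
      have h' := SPS.jb_triangle ξ (-ζ)
      rw [SPS.jb_neg] at h'
      rwa [sub_eq_add_neg]
    have hreal := SPS.ker_bound_mul hr0 hlow hhigh (SPS.jb_one_le ξ) (SPS.jb_one_le ζ)
      (SPS.jb_one_le (ξ - ζ)) hABC hCAB (norm_nonneg (FH ζ)) (norm_nonneg (FF (ξ - ζ)))
    calc SPS.wgt r' ξ * (↑‖FH ζ‖₊ * ↑‖FF (ξ - ζ)‖₊)
        = ENNReal.ofReal (SPS.jb ξ ^ r' * (‖FH ζ‖ * ‖FF (ξ - ζ)‖)) := by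
          unfold SPS.wgt
          rw [← ofReal_norm_eq_coe_nnnorm, ← ofReal_norm_eq_coe_nnnorm,
            ← ENNReal.ofReal_mul (norm_nonneg _),
            ← ENNReal.ofReal_mul (Real.rpow_nonneg (SPS.jb_pos ξ).le _)]
      _ ≤ ENNReal.ofReal (2 ^ r *
            ((SPS.jb ζ ^ (-r) + SPS.jb (ξ - ζ) ^ (-r) + SPS.jb ξ ^ (-r)) *
            ((SPS.jb ζ ^ r * ‖FH ζ‖) * (SPS.jb (ξ - ζ) ^ r' * ‖FF (ξ - ζ)‖)))) :=
          ENNReal.ofReal_le_ofReal hreal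
      _ = ENNReal.ofReal (2 ^ r) * ((M ζ + M (ξ - ζ) + M ξ) * (G ζ * W (ξ - ζ))) := by
          have nb : ∀ (x : En n) (s : ℝ), 0 ≤ SPS.jb x ^ s := fun x s =>
            Real.rpow_nonneg (SPS.jb_pos x).le _
          rw [hMdef, hGdef, hWdef]
          unfold SPS.wgt
          rw [ENNReal.ofReal_mul (by positivity)]
          congr 1
          rw [ENNReal.ofReal_mul (add_nonneg (add_nonneg (nb ζ _) (nb (ξ - ζ) _)) (nb ξ _))]
          congr 1
          · rw [ENNReal.ofReal_add (add_nonneg (nb ζ _) (nb (ξ - ζ) _)) (nb ξ _),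
              ENNReal.ofReal_add (nb ζ _) (nb (ξ - ζ) _)]
          · rw [ENNReal.ofReal_mul (mul_nonneg (nb ζ _) (norm_nonneg _))]
            congr 1
            · rw [ENNReal.ofReal_mul (Real.rpow_nonneg (SPS.jb_pos ζ).le _),
                ofReal_norm_eq_coe_nnnorm]
            · rw [ENNReal.ofReal_mul (Real.rpow_nonneg (SPS.jb_pos (ξ - ζ)).le _),
                ofReal_norm_eq_coe_nnnorm]
  set T₁ : En n → ℝ≥0∞ := fun ξ => ∫⁻ ζ, (fun x => M x * G x) ζ * W (ξ - ζ) with hT₁def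
  set T₂ : En n → ℝ≥0∞ := fun ξ => ∫⁻ ζ, (fun x => M x * W x) (ξ - ζ) * G ζ with hT₂def
  set T₃ : En n → ℝ≥0∞ := fun ξ => M ξ * ∫⁻ ζ, G ζ * W (ξ - ζ) with hT₃def
  have hT1m : Measurable T₁ := by
    apply Measurable.lintegral_prod_right
    exact (((hMm.comp measurable_snd).mul (hGm.comp measurable_snd)).mul
      (hWm.comp (measurable_fst.sub measurable_snd)))
  have hT2m : Measurable T₂ := by
    apply Measurable.lintegral_prod_right
    exact (((hMm.mul hWm).comp (measurable_fst.sub measurable_snd)).mul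
      (hGm.comp measurable_snd))
  have hT3m : Measurable T₃ := by
    apply hMm.mul
    apply Measurable.lintegral_prod_right
    exact ((hGm.comp measurable_snd).mul (hWm.comp (measurable_fst.sub measurable_snd)))
  have hpt : ∀ ξ, SPS.wgt r' ξ * ↑‖FourierTransform.fourier (fun x => h x * f x) ξ‖₊
      ≤ ENNReal.ofReal (2 ^ r) * (T₁ ξ + (T₂ ξ + T₃ ξ)) := by
    intro ξ
    calc SPS.wgt r' ξ * ↑‖FourierTransform.fourier (fun x => h x * f x) ξ‖₊
        ≤ SPS.wgt r' ξ * ∫⁻ ζ, ↑‖FH ζ‖₊ * ↑‖FF (ξ - ζ)‖₊ := mul_le_mul_right (henorm ξ) _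
      _ = ∫⁻ ζ, SPS.wgt r' ξ * (↑‖FH ζ‖₊ * ↑‖FF (ξ - ζ)‖₊) :=
          (lintegral_const_mul _ ((hFHm.nnnorm.coe_nnreal_ennreal).mul
            ((hFFm.nnnorm.coe_nnreal_ennreal).comp (measurable_const.sub measurable_id)))).symm
      _ ≤ ∫⁻ ζ, ENNReal.ofReal (2 ^ r) * ((M ζ + M (ξ - ζ) + M ξ) * (G ζ * W (ξ - ζ))) :=
          lintegral_mono (hker ξ)
      _ = ENNReal.ofReal (2 ^ r) * ∫⁻ ζ, (M ζ + M (ξ - ζ) + M ξ) * (G ζ * W (ξ - ζ)) :=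
          lintegral_const_mul _ (((hMm.add (hMm.comp (measurable_const.sub measurable_id))).add
            measurable_const).mul (hGm.mul (hWm.comp (measurable_const.sub measurable_id))))
      _ = ENNReal.ofReal (2 ^ r) * (T₁ ξ + (T₂ ξ + T₃ ξ)) := by
          congr 1
          have hexp : ∀ ζ, (M ζ + M (ξ - ζ) + M ξ) * (G ζ * W (ξ - ζ))
              = (fun x => M x * G x) ζ * W (ξ - ζ) +
                ((fun x => M x * W x) (ξ - ζ) * G ζ + M ξ * (G ζ * W (ξ - ζ))) := by
            intro ζ
            simp only
            ring
          have m1 : Measurable fun ζ : En n => (fun x => M x * G x) ζ * W (ξ - ζ) :=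
            (hMm.mul hGm).mul (hWm.comp (measurable_const.sub measurable_id))
          have m2 : Measurable fun ζ : En n => (fun x => M x * W x) (ξ - ζ) * G ζ :=
            ((hMm.mul hWm).comp (measurable_const.sub measurable_id)).mul hGm
          have m3 : Measurable fun ζ : En n => G ζ * W (ξ - ζ) :=
            hGm.mul (hWm.comp (measurable_const.sub measurable_id))
          rw [lintegral_congr hexp, lintegral_add_left m1, lintegral_add_left m2,
            lintegral_const_mul _ m3]
  have hN1 : SPS.N2 T₁ ≤ (κ * SPS.N2 G) * SPS.N2 W := by
    have hsw : T₁ = fun ξ => ∫⁻ η, (fun x => M x * G x) (ξ - η) * W η := by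
      funext ξ
      exact SPS.swap_var (fun x => M x * G x) W (hMm.mul hGm) hWm ξ
    rw [hsw]
    refine le_trans (SPS.conv_L1_L2 (hMm.mul hGm) hWm) ?_
    gcongr
    exact SPS.cs_lintegral hMm.aemeasurable hGm.aemeasurable
  have hN2 : SPS.N2 T₂ ≤ ((κ * SPS.N2 W) * SPS.N2 G) := by
    refine le_trans (SPS.conv_L1_L2 (hMm.mul hWm) hGm) ?_
    gcongr
    exact SPS.cs_lintegral hMm.aemeasurable hWm.aemeasurable
  have hN3 : SPS.N2 T₃ ≤ κ * (SPS.N2 G * SPS.N2 W) := by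
    have hb : ∀ ξ, T₃ ξ ≤ M ξ * (SPS.N2 G * SPS.N2 W) := fun ξ =>
      mul_le_mul_right (SPS.conv_sup hGm hWm ξ) _
    refine le_trans (SPS.N2_mono hb) ?_
    rw [SPS.N2_mul_const _ _ hMm]
  calc sobNorm r' (fun x => h x * f x)
      = SPS.N2 (fun ξ => SPS.wgt r' ξ * ↑‖FourierTransform.fourier (fun x => h x * f x) ξ‖₊) :=
        SPS.sobNorm_eq r' _
    _ ≤ SPS.N2 (fun ξ => ENNReal.ofReal (2 ^ r) * (T₁ ξ + (T₂ ξ + T₃ ξ))) := SPS.N2_mono hpt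
    _ = ENNReal.ofReal (2 ^ r) * SPS.N2 (fun ξ => T₁ ξ + (T₂ ξ + T₃ ξ)) :=
        SPS.N2_const_mul _ _ (hT1m.add (hT2m.add hT3m))
    _ ≤ ENNReal.ofReal (2 ^ r) * (SPS.N2 T₁ + (SPS.N2 T₂ + SPS.N2 T₃)) := by
        apply mul_le_mul_right
        refine le_trans (SPS.N2_add_le hT1m (hT2m.add hT3m)) ?_
        gcongr
        exact SPS.N2_add_le hT2m hT3m
    _ ≤ ENNReal.ofReal (2 ^ r) * ((κ * SPS.N2 G) * SPS.N2 W +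
          ((κ * SPS.N2 W) * SPS.N2 G + κ * (SPS.N2 G * SPS.N2 W))) := by
        apply mul_le_mul_right
        gcongr
    _ = (ENNReal.ofReal (2 ^ r) * (3 * κ)) * (SPS.N2 G * SPS.N2 W) := by ring
    _ ≤ ENNReal.ofReal (2 ^ r * 3 * (κ.toReal + 1)) * (SPS.N2 G * SPS.N2 W) := by
        apply mul_le_mul_left
        have h3 : (3 : ℝ≥0∞) = ENNReal.ofReal 3 := by norm_num
        calc ENNReal.ofReal (2 ^ r) * (3 * κ)
            = ENNReal.ofReal (2 ^ r) * (ENNReal.ofReal 3 * ENNReal.ofReal κ.toReal) := by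
              rw [ENNReal.ofReal_toReal hκne, ← h3]
          _ = ENNReal.ofReal (2 ^ r * 3 * κ.toReal) := by
              rw [← ENNReal.ofReal_mul (by norm_num), ← ENNReal.ofReal_mul (by positivity)]
              ring_nf
          _ ≤ ENNReal.ofReal (2 ^ r * 3 * (κ.toReal + 1)) := by
              apply ENNReal.ofReal_le_ofReal
              have : (0:ℝ) < 2 ^ r := by positivity
              nlinarith [ENNReal.toReal_nonneg (a := κ)]
    _ = ENNReal.ofReal (2 ^ r * 3 * (κ.toReal + 1)) * (sobNorm r h * sobNorm r' f) := by
        rw [SPS.sobNorm_eq r (⇑h), SPS.sobNorm_eq r' (⇑f), ← hFHdef, ← hFFdef, ← hGdef, ← hWdef]
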